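/- If M is a noetherian gcd-monoid whose right basic elements all have S-length at most C (S the atom set), then for all a, b in M such that a ∨ b exists, the S-length of a ∨ b is at most C(ℓ_S(a) + ℓ_S(b)). -/

import Mathlib

namespace MFR

variable {M : Type*} [Monoid M]

/-- `a` left-divides `b`. -/
def LeftDvd (a b : M) : Prop := ∃ x, a * x = b

/-- `a` right-divides `b`. -/
def RightDvd (a b : M) : Prop := ∃ x, x * a = b

/-- `m` is a right lcm of `a` and `b`. -/
def IsRightLcm (a b m : M) : Prop :=
  LeftDvd a m ∧ LeftDvd b m ∧ ∀ m', LeftDvd a m' → LeftDvd b m' → LeftDvd m m'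

/-- `m` is a left lcm of `a` and `b`. -/
def IsLeftLcm (a b m : M) : Prop :=
  RightDvd a m ∧ RightDvd b m ∧ ∀ m', RightDvd a m' → RightDvd b m' → RightDvd m m'

/-- `d` is a left gcd of `a` and `b`. -/
def IsLeftGcd (a b d : M) : Prop :=
  LeftDvd d a ∧ LeftDvd d b ∧ ∀ e, LeftDvd e a → LeftDvd e b → LeftDvd e d

/-- `d` is a right gcd of `a` and `b`. -/
def IsRightGcd (a b d : M) : Prop :=
  RightDvd d a ∧ RightDvd d b ∧ ∀ e, RightDvd e a → RightDvd e b → RightDvd e d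

/-- A gcd-monoid: cancellative, no nontrivial invertible elements,
left and right gcds exist. -/
structure IsGcdMon (M : Type*) [Monoid M] : Prop where
  mul_left_cancel : ∀ a b c : M, a * b = a * c → b = c
  mul_right_cancel : ∀ a b c : M, b * a = c * a → b = c
  unit_eq_one : ∀ a : M, IsUnit a → a = 1
  exists_leftGcd : ∀ a b : M, ∃ d, IsLeftGcd a b d
  exists_rightGcd : ∀ a b : M, ∃ d, IsRightGcd a b d

/-- Proper left divisibility: `a < b`. -/
def PLDvd (a b : M) : Prop := ∃ x, ¬ IsUnit x ∧ a * x = b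

/-- Proper right divisibility. -/
def PRDvd (a b : M) : Prop := ∃ x, ¬ IsUnit x ∧ x * a = b

/-- Noetherian: proper left and right divisibility are well-founded. -/
def Noeth (M : Type*) [Monoid M] : Prop :=
  WellFounded (PLDvd (M := M)) ∧ WellFounded (PRDvd (M := M))

/-- Proper factor relation. -/
def Factor (a b : M) : Prop := ∃ x y, x * a * y = b ∧ (¬ IsUnit x ∨ ¬ IsUnit y)

/-- Atoms: not a product of two non-invertible elements. -/
def Atomic (a : M) : Prop := ¬ IsUnit a ∧ ∀ x y, a = x * y → IsUnit x ∨ IsUnit y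

/-- Existence of a common right multiple. -/
def CommonRightMul (a b : M) : Prop := ∃ m, LeftDvd a m ∧ LeftDvd b m

/-- Existence of a common left multiple. -/
def CommonLeftMul (a b : M) : Prop := ∃ m, RightDvd a m ∧ RightDvd b m

/-- The 3-Ore condition. -/
def ThreeOre (M : Type*) [Monoid M] : Prop :=
  (∀ a b c : M, CommonRightMul a b → CommonRightMul a c → CommonRightMul b c →
    ∃ m, LeftDvd a m ∧ LeftDvd b m ∧ LeftDvd c m) ∧
  (∀ a b c : M, CommonLeftMul a b → CommonLeftMul a c → CommonLeftMul b c →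
    ∃ m, RightDvd a m ∧ RightDvd b m ∧ RightDvd c m)

/-- The product of two multifractions. -/
def fprod : List M → List M → List M
  | [], b => b
  | a, [] => a
  | a, h :: t =>
    if a.length % 2 = 1 then a.dropLast ++ ((a.getLast?.getD 1) * h) :: t
    else a ++ h :: t

/-- The congruence `≃` on multifractions generated by `(1,∅)`, `(a/a,∅)`, `(1/a/a,∅)`. -/
inductive SimEq : List M → List M → Prop
  | one : SimEq [1] []
  | divPos (a : M) : SimEq [a, a] []
  | divNeg (a : M) : SimEq [1, a, a] []
  | refl (a : List M) : SimEq a a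
  | symm {a b} : SimEq a b → SimEq b a
  | trans {a b c} : SimEq a b → SimEq b c → SimEq a c
  | mul {a b c d} : SimEq a b → SimEq c d → SimEq (fprod a c) (fprod b d)

/-- The reduction rule `R_{i,x}` on multifractions (entries indexed from 1):
`Reduce i x a b` means `b = a • R_{i,x}`. -/
def Reduce (i : ℕ) (x : M) (a b : List M) : Prop :=
  (i = 1 ∧ ∃ (a₁ a₂ b₁ b₂ : M) (s : List M),
    a = a₁ :: a₂ :: s ∧ b = b₁ :: b₂ :: s ∧ b₁ * x = a₁ ∧ b₂ * x = a₂) ∨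
  (2 ≤ i ∧ i % 2 = 0 ∧ ∃ (p s : List M) (am ai ap bi bp x' : M),
    p.length = i - 2 ∧
    a = p ++ am :: ai :: ap :: s ∧
    b = p ++ (am * x') :: bi :: bp :: s ∧
    IsRightLcm x ai (x * bi) ∧ x * bi = ai * x' ∧ x * bp = ap) ∨
  (3 ≤ i ∧ i % 2 = 1 ∧ ∃ (p s : List M) (am ai ap bi bp x' : M),
    p.length = i - 2 ∧
    a = p ++ am :: ai :: ap :: s ∧
    b = p ++ (x' * am) :: bi :: bp :: s ∧
    IsLeftLcm x ai (bi * x) ∧ bi * x = x' * ai ∧ bp * x = ap)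

/-- One-step reduction. -/
def Red (a b : List M) : Prop := ∃ i x, x ≠ (1 : M) ∧ Reduce i x a b

/-- Reflexive-transitive closure of one-step reduction. -/
def RedStar : List M → List M → Prop := Relation.ReflTransGen Red

/-- Irreducible multifractions. -/
def RIrred (a : List M) : Prop := ∀ b, ¬ Red a b

/-- Right basic elements: closure of the atoms under right complement. -/
inductive RightBasic : M → Prop
  | atom {a : M} : Atomic a → RightBasic a
  | compl {a b a' : M} : RightBasic a → RightBasic b →
      IsRightLcm a b (b * a') → RightBasic a'

/-- Minimal number of atoms needed to express `a`. -/
noncomputable def atomLen (a : M) : ℕ :=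
  sInf {n | ∃ l : List M, (∀ x ∈ l, Atomic x) ∧ l.length = n ∧ l.prod = a}

/-!
Write `X` for the set of right basic elements; atoms are right basic, so `a ∈ X ^ ℓ(a)`.
Splitting `b = y c` with `y ∈ X`, the right lcm of `a` and `b` is computed in two steps:
`a ∨ y = y a₁ = a y'` and then `a₁ ∨ c`. When `a` is basic, `a₁` is basic again and induction
on the length of `b` shows `a ∨ b = a b'` with `b' ∈ X ^ q` whenever `b ∈ X ^ q`; one more
induction, on the length of `a`, extends this to `a ∈ X ^ p`. Hence `a ∨ b ∈ X ^ (p + q)`, and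
every element of `X ^ n` has atom length at most `C n`.
-/

open scoped Pointwise

lemma IsGcdMon.leftDvd_cancel (h : IsGcdMon M) {a b c : M} (hd : LeftDvd (a * b) (a * c)) :
    LeftDvd b c := by
  obtain ⟨x, hx⟩ := hd
  exact ⟨x, h.mul_left_cancel a _ _ (by rw [← hx, mul_assoc])⟩

lemma IsGcdMon.leftDvd_antisymm (h : IsGcdMon M) {a b : M} (hab : LeftDvd a b)
    (hba : LeftDvd b a) : a = b := by
  obtain ⟨x, rfl⟩ := hab
  obtain ⟨y, hy⟩ := hba
  have hxy : x * y = 1 := h.mul_left_cancel a _ _ (by rw [← mul_assoc, hy, mul_one])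
  have hyx : y * x = 1 := h.mul_left_cancel (a * x) _ _ (by rw [mul_one, ← mul_assoc, hy])
  rw [h.unit_eq_one x ⟨⟨x, y, hxy, hyx⟩, rfl⟩, mul_one]

lemma IsRightLcm.symm {a b m : M} (hm : IsRightLcm a b m) : IsRightLcm b a m :=
  ⟨hm.2.1, hm.1, fun m' ha hb => hm.2.2 m' hb ha⟩

lemma IsGcdMon.isRightLcm_unique (h : IsGcdMon M) {a b m m' : M} (hm : IsRightLcm a b m)
    (hm' : IsRightLcm a b m') : m = m' :=
  h.leftDvd_antisymm (hm.2.2 m' hm'.1 hm'.2.1) (hm'.2.2 m hm.1 hm.2.1)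

/-- A `PLDvd`-minimal common multiple is a right lcm: it left-divides its left gcd with any
other common multiple, and minimality forces that gcd to be itself. -/
lemma exists_isRightLcm (h : IsGcdMon M) (hn : Noeth M) {a b : M} (hc : CommonRightMul a b) :
    ∃ m, IsRightLcm a b m := by
  obtain ⟨m, ⟨ham, hbm⟩, hmin⟩ := hn.1.has_min {m | LeftDvd a m ∧ LeftDvd b m} hc
  refine ⟨m, ham, hbm, fun m' ham' hbm' => ?_⟩
  obtain ⟨d, ⟨u, hu⟩, hdm', hd⟩ := h.exists_leftGcd m m'
  by_cases hunit : IsUnit u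
  · rw [h.unit_eq_one u hunit, mul_one] at hu
    exact hu ▸ hdm'
  · exact absurd ⟨u, hunit, hu⟩ (hmin d ⟨hd a ham ham', hd b hbm hbm'⟩)

lemma IsRightLcm.mul_right (h : IsGcdMon M) {a y a₁ c a₂ : M} (h₁ : IsRightLcm a y (y * a₁))
    (h₂ : IsRightLcm a₁ c (c * a₂)) : IsRightLcm a (y * c) (y * (c * a₂)) := by
  refine ⟨?_, ⟨a₂, mul_assoc _ _ _⟩, ?_⟩
  · obtain ⟨u, hu⟩ := h₁.1
    obtain ⟨v, hv⟩ := h₂.1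
    exact ⟨u * v, by rw [← mul_assoc, hu, mul_assoc, hv]⟩
  · rintro m' ham' ⟨n, rfl⟩
    obtain ⟨s, hs⟩ := h₁.2.2 _ ham' ⟨c * n, (mul_assoc _ _ _).symm⟩
    have ha₁ : LeftDvd a₁ (c * n) := h.leftDvd_cancel ⟨s, by rw [← mul_assoc, hs, mul_assoc]⟩
    obtain ⟨t, ht⟩ := h₂.2.2 _ ha₁ ⟨n, rfl⟩
    exact ⟨t, by rw [mul_assoc, ht, mul_assoc]⟩

lemma exists_isRightLcm_mul (h : IsGcdMon M) (hn : Noeth M) {a y c m : M}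
    (hm : IsRightLcm a (y * c) m) :
    ∃ a₁ a₂, IsRightLcm a y (y * a₁) ∧ IsRightLcm a₁ c (c * a₂) ∧ m = y * (c * a₂) := by
  have hym : LeftDvd y m := by
    obtain ⟨u, hu⟩ := hm.2.1
    exact ⟨c * u, by rw [← mul_assoc, hu]⟩
  obtain ⟨m₁, hm₁⟩ := exists_isRightLcm h hn ⟨m, hm.1, hym⟩
  obtain ⟨a₁, rfl⟩ := hm₁.2.1
  obtain ⟨r, rfl⟩ := hym
  have ha₁r : LeftDvd a₁ r := h.leftDvd_cancel (hm₁.2.2 _ hm.1 ⟨r, rfl⟩)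
  have hcr : LeftDvd c r := h.leftDvd_cancel hm.2.1
  obtain ⟨m₂, hm₂⟩ := exists_isRightLcm h hn ⟨r, ha₁r, hcr⟩
  obtain ⟨a₂, rfl⟩ := hm₂.2.1
  exact ⟨a₁, a₂, hm₁, hm₂, h.isRightLcm_unique hm (hm₁.mul_right h hm₂)⟩

lemma list_prod_mem_pow_length {s : Set M} {l : List M} (hl : ∀ x ∈ l, x ∈ s) :
    l.prod ∈ s ^ l.length := by
  induction l with
  | nil => exact Set.one_mem_one
  | cons x l ih =>
    rw [List.prod_cons, List.length_cons, pow_succ']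
    rw [List.forall_mem_cons] at hl
    exact Set.mul_mem_mul hl.1 (ih hl.2)

def rightBasics (M : Type*) [Monoid M] : Set M := {x | RightBasic x}

lemma RightBasic.exists_isRightLcm_eq_mul_mem_pow (h : IsGcdMon M) (hn : Noeth M) {a : M}
    (ha : RightBasic a) {q : ℕ} {b m : M} (hb : b ∈ rightBasics M ^ q)
    (hm : IsRightLcm a b m) : ∃ b' ∈ rightBasics M ^ q, m = a * b' := by
  induction q generalizing a b m with
  | zero =>
    rw [pow_zero, Set.mem_one] at hb
    subst hb
    refine ⟨1, Set.one_mem_one, h.isRightLcm_unique hm ?_ |>.trans (mul_one a).symm⟩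
    exact ⟨⟨1, mul_one a⟩, ⟨a, one_mul a⟩, fun _ ha' _ => ha'⟩
  | succ q ih =>
    rw [pow_succ'] at hb
    obtain ⟨y, hy, c, hc, rfl⟩ := hb
    obtain ⟨a₁, a₂, h₁, h₂, rfl⟩ := exists_isRightLcm_mul h hn hm
    obtain ⟨c', hc', hc'eq⟩ := ih (RightBasic.compl ha hy h₁) hc h₂
    obtain ⟨y', hy'⟩ := h₁.1
    rw [pow_succ']
    refine ⟨y' * c', Set.mul_mem_mul (RightBasic.compl hy ha (hy' ▸ h₁.symm)) hc', ?_⟩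
    rw [hc'eq, ← mul_assoc, ← hy', mul_assoc]

lemma exists_isRightLcm_eq_mul_mem_pow (h : IsGcdMon M) (hn : Noeth M) {p q : ℕ} {a b m : M}
    (ha : a ∈ rightBasics M ^ p) (hb : b ∈ rightBasics M ^ q) (hm : IsRightLcm a b m) :
    ∃ b' ∈ rightBasics M ^ q, m = a * b' := by
  induction p generalizing a b m with
  | zero =>
    rw [pow_zero, Set.mem_one] at ha
    subst ha
    exact ⟨m, h.isRightLcm_unique hm ⟨⟨b, one_mul b⟩, ⟨1, mul_one b⟩, fun _ _ hb' => hb'⟩ ▸ hb,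
      (one_mul m).symm⟩
  | succ p ih =>
    rw [pow_succ'] at ha
    obtain ⟨x, hx, s, hs, rfl⟩ := ha
    obtain ⟨b₁, b₂, h₁, h₂, rfl⟩ := exists_isRightLcm_mul h hn hm.symm
    obtain ⟨b₁', hb₁', hb₁eq⟩ := RightBasic.exists_isRightLcm_eq_mul_mem_pow h hn hx hb h₁.symm
    obtain ⟨b₂', hb₂', hb₂eq⟩ :=
      ih hs (h.mul_left_cancel x _ _ hb₁eq ▸ hb₁' : b₁ ∈ rightBasics M ^ q) h₂.symm
    exact ⟨b₂', hb₂', by rw [hb₂eq, mul_assoc]⟩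

lemma isRightLcm_mem_pow_add (h : IsGcdMon M) (hn : Noeth M) {p q : ℕ} {a b m : M}
    (ha : a ∈ rightBasics M ^ p) (hb : b ∈ rightBasics M ^ q) (hm : IsRightLcm a b m) :
    m ∈ rightBasics M ^ (p + q) := by
  obtain ⟨b', hb', rfl⟩ := exists_isRightLcm_eq_mul_mem_pow h hn ha hb hm
  exact pow_add (rightBasics M) p q ▸ Set.mul_mem_mul ha hb'

lemma exists_atom_leftDvd (hn : Noeth M) {a : M} (ha : ¬ IsUnit a) :
    ∃ p, Atomic p ∧ LeftDvd p a := by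
  obtain ⟨p, ⟨hp, x, hx⟩, hmin⟩ :=
    hn.1.has_min {p | ¬ IsUnit p ∧ LeftDvd p a} ⟨a, ha, 1, mul_one a⟩
  refine ⟨p, ⟨hp, fun y z hyz => ?_⟩, x, hx⟩
  by_contra! hyz'
  exact hmin y ⟨hyz'.1, z * x, by rw [← mul_assoc, ← hyz, hx]⟩ ⟨z, hyz'.2, hyz.symm⟩

lemma exists_atom_list (h : IsGcdMon M) (hn : Noeth M) (a : M) :
    ∃ l : List M, (∀ x ∈ l, Atomic x) ∧ l.prod = a := by
  induction a using hn.2.induction with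
  | _ a ih =>
    by_cases hu : IsUnit a
    · exact ⟨[], by simp, by simp [h.unit_eq_one a hu]⟩
    · obtain ⟨p, hp, c, rfl⟩ := exists_atom_leftDvd hn hu
      obtain ⟨l, hl, rfl⟩ := ih c ⟨p, hp.1, rfl⟩
      exact ⟨p :: l, List.forall_mem_cons.2 ⟨hp, hl⟩, List.prod_cons⟩

lemma exists_atom_list_length_eq_atomLen (h : IsGcdMon M) (hn : Noeth M) (a : M) :
    ∃ l : List M, (∀ x ∈ l, Atomic x) ∧ l.length = atomLen a ∧ l.prod = a := by
  obtain ⟨l, hl, hprod⟩ := exists_atom_list h hn a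
  exact Nat.sInf_mem (s := {n | ∃ l : List M, (∀ x ∈ l, Atomic x) ∧ l.length = n ∧ l.prod = a})
    ⟨l.length, l, hl, rfl, hprod⟩

lemma atomLen_le_length {a : M} {l : List M} (hl : ∀ x ∈ l, Atomic x) (hprod : l.prod = a) :
    atomLen a ≤ l.length :=
  Nat.sInf_le ⟨l, hl, rfl, hprod⟩

lemma atomLen_mul_le (h : IsGcdMon M) (hn : Noeth M) (a b : M) :
    atomLen (a * b) ≤ atomLen a + atomLen b := by
  obtain ⟨la, hla, hlen_a, rfl⟩ := exists_atom_list_length_eq_atomLen h hn a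
  obtain ⟨lb, hlb, hlen_b, rfl⟩ := exists_atom_list_length_eq_atomLen h hn b
  rw [← hlen_a, ← hlen_b, ← List.length_append, ← List.prod_append]
  exact atomLen_le_length (List.forall_mem_append.2 ⟨hla, hlb⟩) rfl

lemma mem_rightBasics_pow_atomLen (h : IsGcdMon M) (hn : Noeth M) (a : M) :
    a ∈ rightBasics M ^ atomLen a := by
  obtain ⟨l, hl, hlen, rfl⟩ := exists_atom_list_length_eq_atomLen h hn a
  exact hlen ▸ list_prod_mem_pow_length (s := rightBasics M) fun x hx => RightBasic.atom (hl x hx)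

lemma atomLen_le_mul_of_mem_rightBasics_pow (h : IsGcdMon M) (hn : Noeth M) {C : ℕ}
    (hC : ∀ x : M, RightBasic x → atomLen x ≤ C) {n : ℕ} {a : M}
    (ha : a ∈ rightBasics M ^ n) : atomLen a ≤ C * n := by
  induction n generalizing a with
  | zero =>
    rw [pow_zero, Set.mem_one] at ha
    subst ha
    simpa using atomLen_le_length (l := ([] : List M)) (by simp) rfl
  | succ n ih =>
    rw [pow_succ'] at ha
    obtain ⟨x, hx, y, hy, rfl⟩ := ha
    calc atomLen (x * y) ≤ atomLen x + atomLen y := atomLen_mul_le h hn x y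
      _ ≤ C + C * n := add_le_add (hC x hx) (ih hy)
      _ = C * (n + 1) := by ring

/-- if every right basic element has atom-length at most `C`,
then `ℓ(a ∨ b) ≤ C(ℓ(a) + ℓ(b))`. -/
theorem stmt_17 {M : Type*} [Monoid M] (h : IsGcdMon M) (hn : Noeth M)
    (C : ℕ) (hC : ∀ x : M, RightBasic x → atomLen x ≤ C)
    (a b m : M) (hm : IsRightLcm a b m) :
    atomLen m ≤ C * (atomLen a + atomLen b) :=
  atomLen_le_mul_of_mem_rightBasics_pow h hn hC <| isRightLcm_mem_pow_add h hn
    (mem_rightBasics_pow_atomLen h hn a) (mem_rightBasics_pow_atomLen h hn b) hm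

end MFR
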